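/- In the PARTITION-to-DRP-MSR construction, for any permutation π of [2n+2] with π(i) ∉ {1,2} for all i ∈ [1,n], the send cost of machine 1 equals ∑ of s_i over {i : π(i) ∈ [3,n+2]}, the send cost of machine 2 equals ∑ of s_i over {i : π(i) ∈ [n+3,2n+2]}, the receive costs of machines 1 and 2 are 0, the send costs of machines 3,...,2n+2 are 0, and the sets {s_i : π(i) ∈ [3,n+2]} and {s_i : π(i) ∈ [n+3,2n+2]} form a partition of S. -/

import Mathlib

open Finset

/-- Transmission matrix of the PARTITION-to-DRP-MSR reduction (0-indexed). -/
def redT (n : ℕ) (s : Fin n → ℕ) : Matrix (Fin (2*n+2)) (Fin (2*n+2)) ℝ :=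
  fun i j => if h : (i.val = 0 ∨ i.val = 1) ∧ j.val < n then (s ⟨j.val, h.2⟩ : ℝ) else 0

/-- Communication cost matrix of the PARTITION-to-DRP-MSR reduction (0-indexed). -/
def redC (n : ℕ) (Δ : ℕ) : Matrix (Fin (2*n+2)) (Fin (2*n+2)) ℝ :=
  fun i j =>
    if i.val = 0 ∧ 2 ≤ j.val ∧ j.val ≤ n+1 then 1
    else if i.val = 1 ∧ n+2 ≤ j.val then 1
    else if (i.val = 0 ∧ j.val = 1) ∨ (i.val = 1 ∧ j.val = 0) then (Δ : ℝ)
    else 0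

/-- Send cost of machine `i` under permutation `π`. -/
def sendCost {m : ℕ} (T C : Matrix (Fin m) (Fin m) ℝ) (π : Equiv.Perm (Fin m)) (i : Fin m) : ℝ :=
  ∑ j, T i j * C i (π j)

/-- Receive cost of machine `i` under permutation `π`. -/
def rcvCost {m : ℕ} (T C : Matrix (Fin m) (Fin m) ℝ) (π : Equiv.Perm (Fin m)) (i : Fin m) : ℝ :=
  ∑ j, T j (π⁻¹ i) * C j i

/-- Value `s_j` of the data column `j` (0 for the all-zero columns). -/
def colVal (n : ℕ) (s : Fin n → ℕ) (j : Fin (2*n+2)) : ℝ :=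
  if h : j.val < n then (s ⟨j.val, h⟩ : ℝ) else 0

/-!
Only rows 0 and 1 of `T` are nonzero, and only in the data columns `j < n`, which `π` sends to
columns `≥ 2`. Hence the `Δ` entries of `C` are never used, every machine other than 0 and 1
sends nothing, and machines 0 and 1 receive nothing because their preimages under `π` are empty
columns of `T`. On columns `≥ 2`, rows 0 and 1 of `C` are the indicators of `[2, n+1]` and
`[n+2, 2n+1]`, so the send costs of machines 0 and 1 are the sums of `s_j` over the data columns
mapped into those ranges, which partition the data columns.
-/

section

variable {n : ℕ} (s : Fin n → ℕ)

theorem redT_apply (i j : Fin (2*n+2)) :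
    redT n s i j = if i.val < 2 then colVal n s j else 0 := by
  unfold redT colVal
  split_ifs <;> first | rfl | omega

theorem colVal_eq_zero {j : Fin (2*n+2)} (hj : n ≤ j.val) : colVal n s j = 0 :=
  dif_neg (Nat.not_lt.mpr hj)

theorem redC_apply_of_val_eq_zero (Δ : ℕ) {i k : Fin (2*n+2)}
    (hi : i.val = 0) (hk : k.val ≠ 1) :
    redC n Δ i k = if 2 ≤ k.val ∧ k.val ≤ n+1 then 1 else 0 := by
  unfold redC
  split_ifs <;> simp_all

theorem redC_apply_of_val_eq_one (Δ : ℕ) {i k : Fin (2*n+2)}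
    (hi : i.val = 1) (hk : k.val ≠ 0) :
    redC n Δ i k = if n+2 ≤ k.val then 1 else 0 := by
  unfold redC
  split_ifs <;> simp_all

variable (C : Matrix (Fin (2*n+2)) (Fin (2*n+2)) ℝ) (π : Equiv.Perm (Fin (2*n+2)))

theorem sendCost_redT_of_lt_two {i : Fin (2*n+2)} (hi : i.val < 2) :
    sendCost (redT n s) C π i = ∑ j, colVal n s j * C i (π j) := by
  simp only [sendCost, redT_apply, if_pos hi]

theorem sendCost_redT_of_two_le {i : Fin (2*n+2)} (hi : 2 ≤ i.val) :
    sendCost (redT n s) C π i = 0 := by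
  simp [sendCost, redT_apply, Nat.not_lt.mpr hi]

theorem rcvCost_redT_eq_zero {i : Fin (2*n+2)} (hi : n ≤ (π⁻¹ i).val) :
    rcvCost (redT n s) C π i = 0 := by
  simp only [rcvCost, redT_apply, colVal_eq_zero s hi, ite_self, zero_mul, sum_const_zero]

theorem sum_colVal_mul_eq_sum_filter (p : Fin (2*n+2) → Prop) [DecidablePred p]
    (f : Fin (2*n+2) → ℝ) (hf : ∀ j : Fin (2*n+2), j.val < n → f j = if p j then 1 else 0) :
    ∑ j, colVal n s j * f j =
      ∑ j ∈ univ.filter (fun j => j.val < n ∧ p j), colVal n s j := by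
  rw [sum_filter]
  refine sum_congr rfl fun j _ => ?_
  by_cases hj : j.val < n
  · by_cases hp : p j <;> simp [hf j hj, hj, hp]
  · simp [hj, colVal_eq_zero s (Nat.not_lt.mp hj)]

end

theorem stmt_4 (n : ℕ) (s : Fin n → ℕ)
    (Δ : ℕ)
    (π : Equiv.Perm (Fin (2*n+2)))
    (hπ : ∀ j : Fin (2*n+2), j.val < n → 2 ≤ (π j).val) :
    sendCost (redT n s) (redC n Δ) π ⟨0, by omega⟩ =
        ∑ j ∈ Finset.univ.filter
          (fun j : Fin (2*n+2) => j.val < n ∧ 2 ≤ (π j).val ∧ (π j).val ≤ n+1),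
          colVal n s j ∧
      sendCost (redT n s) (redC n Δ) π ⟨1, by omega⟩ =
        ∑ j ∈ Finset.univ.filter
          (fun j : Fin (2*n+2) => j.val < n ∧ n+2 ≤ (π j).val),
          colVal n s j ∧
      rcvCost (redT n s) (redC n Δ) π ⟨0, by omega⟩ = 0 ∧
      rcvCost (redT n s) (redC n Δ) π ⟨1, by omega⟩ = 0 ∧
      (∀ i : Fin (2*n+2), 2 ≤ i.val → sendCost (redT n s) (redC n Δ) π i = 0) ∧
      Disjoint
        (Finset.univ.filter
          (fun j : Fin (2*n+2) => j.val < n ∧ 2 ≤ (π j).val ∧ (π j).val ≤ n+1))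
        (Finset.univ.filter
          (fun j : Fin (2*n+2) => j.val < n ∧ n+2 ≤ (π j).val)) ∧
      (Finset.univ.filter
          (fun j : Fin (2*n+2) => j.val < n ∧ 2 ≤ (π j).val ∧ (π j).val ≤ n+1)) ∪
        (Finset.univ.filter
          (fun j : Fin (2*n+2) => j.val < n ∧ n+2 ≤ (π j).val)) =
        Finset.univ.filter (fun j : Fin (2*n+2) => j.val < n) := by
  have hπ_inv : ∀ i : Fin (2*n+2), i.val < 2 → n ≤ (π⁻¹ i).val := fun i hi => by
    by_contra! h
    have := hπ _ h
    rw [Equiv.Perm.coe_inv, Equiv.apply_symm_apply] at this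
    omega
  refine ⟨?_, ?_, rcvCost_redT_eq_zero s _ π (hπ_inv _ Nat.zero_lt_two),
    rcvCost_redT_eq_zero s _ π (hπ_inv _ Nat.one_lt_two),
    fun i hi => sendCost_redT_of_two_le s _ π hi, ?_, ?_⟩
  · rw [sendCost_redT_of_lt_two s _ π Nat.zero_lt_two]
    exact sum_colVal_mul_eq_sum_filter s _ _ fun j hj =>
      redC_apply_of_val_eq_zero Δ rfl (by have := hπ j hj; omega)
  · rw [sendCost_redT_of_lt_two s _ π Nat.one_lt_two]
    exact sum_colVal_mul_eq_sum_filter s _ _ fun j hj =>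
      redC_apply_of_val_eq_one Δ rfl (by have := hπ j hj; omega)
  · exact disjoint_filter.mpr fun j _ h₁ h₂ => by omega
  · ext j
    simp only [mem_union, mem_filter, mem_univ, true_and]
    have := hπ j
    omega
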